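/- Let f : ℝⁿ → ℝ be continuously differentiable and satisfy the α-PL condition for some α > 1 and μ > 0: ‖∇f(x)‖^α ≥ μ (f(x) − min f) for all x. If the set of minimizers of f is bounded, then every sublevel set {x : f(x) ≤ c} is connected; in particular the set of minimizers is connected. -/

import Mathlib

/-!
Under α-PL the function `g = (f - f*) ^ (1 - 1/α)` has gradient norm at least
`(1 - 1/α) μ ^ (1/α)` wherever `f > f*`. Minimizing `g + κ ‖· - x‖` over a large closed ball
(a finite-dimensional Ekeland principle) turns this into the error bound
`κ dist(x, argmin f) ≤ g x`, so sublevel sets of `f` are bounded, hence compact.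
α-PL also makes every critical point a global minimizer. If a sublevel set split into two
separated pieces, each piece would contain a local, hence global, minimizer. A mountain-pass
argument joins any two minimizers by paths staying below `f* + ε`: a path whose maximum is close
to the minimax level can be pushed below that level by a gradient step, because there are no
critical points above `f*`. Such a path would have to cross the gap between the pieces.
-/

open Set Filter Metric Topology InnerProductSpace
open scoped Gradient

section FirstOrder

variable {E F : Type*} [NormedAddCommGroup E] [NormedSpace ℝ E]
  [NormedAddCommGroup F] [NormedSpace ℝ F]

theorem HasFDerivAt.norm_le_of_eventually_le {f : E → ℝ} {f' : E →L[ℝ] ℝ} {x : E} {C : ℝ}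
    (hC : 0 ≤ C) (hf : HasFDerivAt f f' x) (h : ∀ᶠ y in 𝓝 x, f x ≤ f y + C * ‖y - x‖) :
    ‖f'‖ ≤ C := by
  have key : ∀ v, -(C * ‖v‖) ≤ f' v := by
    intro v
    set g : ℝ → ℝ := fun t => f (x + t • v) + C * ‖v‖ * t
    have hray : HasDerivAt (fun t : ℝ => x + t • v) v 0 := by
      simpa using ((hasDerivAt_id (0 : ℝ)).smul_const v).const_add x
    have hg : HasDerivAt g (f' v + C * ‖v‖) 0 := by
      have hf0 : HasFDerivAt f f' (x + (0 : ℝ) • v) := by simpa using hf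
      exact (hf0.comp_hasDerivAt (0 : ℝ) hray).add
        (hasDerivAt_const_mul (C * ‖v‖))
    have hmin : IsLocalMinOn g (Ici 0) 0 := by
      filter_upwards [nhdsWithin_le_nhds (hray.continuousAt.tendsto.mono_right (by simp) h),
        self_mem_nhdsWithin] with t ht (ht0 : 0 ≤ t)
      have hxt : f x ≤ f (x + t • v) + C * ‖x + t • v - x‖ := ht
      rw [add_sub_cancel_left, norm_smul, Real.norm_of_nonneg ht0] at hxt
      simp only [g, zero_smul, add_zero, mul_zero]
      linarith
    have := hmin.hasFDerivWithinAt_nonneg hg.hasFDerivAt.hasFDerivWithinAt (y := 1)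
      (mem_posTangentConeAt_of_segment_subset (by simp [segment_eq_Icc, Icc_subset_Ici_self]))
    simp only [ContinuousLinearMap.toSpanSingleton_apply, smul_eq_mul, one_mul] at this
    linarith
  refine ContinuousLinearMap.opNorm_le_bound f' hC fun v => abs_le.2 ⟨key v, ?_⟩
  simpa using key (-v)

theorem exists_eq_zero_mul_dist_le [ProperSpace E] {g : E → ℝ} (hg : Continuous g)
    (hg0 : ∀ x, 0 ≤ g x) {κ : ℝ} (hκ : 0 < κ)
    (hgrad : ∀ x, 0 < g x → ∃ g' : E →L[ℝ] ℝ, HasFDerivAt g g' x ∧ κ < ‖g'‖) (x : E) :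
    ∃ z, g z = 0 ∧ κ * dist x z ≤ g x := by
  have hr : 0 < g x / κ + 1 := by have := hg0 x; positivity
  obtain ⟨z, -, hz⟩ := (isCompact_closedBall x (g x / κ + 1)).exists_isMinOn
    (nonempty_closedBall.2 hr.le)
    (f := fun y => g y + κ * dist x y) (by fun_prop)
  have hzx : g z + κ * dist x z ≤ g x := by simpa using hz (mem_closedBall_self hr.le)
  -- the minimizer lies in the open ball, so it is an unconstrained local minimizer
  have hzball : z ∈ ball x (g x / κ + 1) := by
    rw [mem_ball, dist_comm, ← mul_lt_mul_iff_of_pos_left hκ, mul_add, mul_div_cancel₀ _ hκ.ne']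
    linarith [hg0 z]
  refine ⟨z, ?_, by linarith [hg0 z]⟩
  by_contra hne
  obtain ⟨g', hg', hκg'⟩ := hgrad z ((hg0 z).lt_of_ne' hne)
  have : ‖g'‖ ≤ κ := hg'.norm_le_of_eventually_le hκ.le <| by
    filter_upwards [closedBall_mem_nhds_of_mem hzball] with y hy
    have hzy : g z + κ * dist x z ≤ g y + κ * dist x y := hz hy
    have htri : dist x y ≤ dist x z + ‖y - z‖ := by
      rw [← dist_eq_norm, dist_comm y]; exact dist_triangle _ _ _
    nlinarith
  linarith

theorem IsCompact.exists_pos_forall_norm_sub_fderiv_le [ProperSpace E] {f : E → F}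
    (hf : ContDiff ℝ 1 f) {K : Set E} (hK : IsCompact K) {ρ : ℝ} (hρ : 0 < ρ) :
    ∃ r > 0, ∀ x ∈ K, ∀ u, ‖u‖ ≤ r → ‖f (x + u) - f x - fderiv ℝ f x u‖ ≤ ρ * ‖u‖ := by
  obtain ⟨r, hr, hclose⟩ := Metric.uniformContinuousOn_iff.1
    ((hK.cthickening (r := 1)).uniformContinuousOn_of_continuous
      (hf.continuous_fderiv one_ne_zero).continuousOn) ρ hρ
  refine ⟨min (r / 2) 1, by positivity, fun x hx u hu => ?_⟩
  have hball : closedBall x (min (r / 2) 1) ⊆ cthickening 1 K :=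
    (closedBall_subset_cthickening hx _).trans (cthickening_mono (min_le_right _ _) K)
  have hderiv : ∀ y ∈ closedBall x (min (r / 2) 1), ‖fderiv ℝ f y - fderiv ℝ f x‖ ≤ ρ := by
    intro y hy
    rw [← dist_eq_norm]
    refine (hclose y (hball hy) x (hball (mem_closedBall_self (by positivity))) ?_).le
    linarith [mem_closedBall.1 hy, min_le_left (r / 2) 1]
  simpa using Convex.norm_image_sub_le_of_norm_fderiv_le'
    (fun y _ => hf.differentiable one_ne_zero y) hderiv (convex_closedBall _ _)
    (mem_closedBall_self (by positivity)) (by simpa using hu : x + u ∈ closedBall x _)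

end FirstOrder

section Gradient

variable {E : Type*} [NormedAddCommGroup E] [InnerProductSpace ℝ E] [CompleteSpace E]
  {f : E → ℝ}

theorem fderiv_apply_gradient (f : E → ℝ) (x : E) : fderiv ℝ f x (∇ f x) = ‖∇ f x‖ ^ 2 := by
  rw [← inner_gradient_left, real_inner_self_eq_norm_sq]

theorem gradient_eq_zero_iff {x : E} : ∇ f x = 0 ↔ fderiv ℝ f x = 0 :=
  (toDual ℝ E).symm.map_eq_zero_iff

theorem ContDiff.continuous_gradient (hf : ContDiff ℝ 1 f) : Continuous (∇ f) :=
  (toDual ℝ E).symm.continuous.comp (hf.continuous_fderiv one_ne_zero)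

variable [ProperSpace E]

theorem IsCompact.eventually_forall_le_sub_gradient (hf : ContDiff ℝ 1 f) {K : Set E}
    (hK : IsCompact K) {ρ : ℝ} (hρ : 0 < ρ) :
    ∀ᶠ s in 𝓝[>] 0, ∀ x ∈ K, f (x - s • ∇ f x) ≤ f x - s * ‖∇ f x‖ * (‖∇ f x‖ - ρ) := by
  obtain ⟨r, hr, htaylor⟩ := hK.exists_pos_forall_norm_sub_fderiv_le hf hρ
  obtain ⟨M, hM⟩ := hK.exists_bound_of_continuousOn hf.continuous_gradient.continuousOn
  filter_upwards [Ioo_mem_nhdsGT (show 0 < r / (|M| + 1) by positivity)] with s ⟨hs0, hsr⟩ x hx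
  have hstep : ‖-(s • ∇ f x)‖ = s * ‖∇ f x‖ := by
    rw [norm_neg, norm_smul, Real.norm_of_nonneg hs0.le]
  have hsmall : s * ‖∇ f x‖ ≤ r := by
    rw [lt_div_iff₀ (by positivity)] at hsr
    nlinarith [hM x hx, le_abs_self M]
  have := (le_abs_self _).trans (htaylor x hx _ (hstep ▸ hsmall))
  rw [map_neg, map_smul, fderiv_apply_gradient, hstep, ← sub_eq_add_neg, smul_eq_mul] at this
  linarith

theorem exists_path_deformation (hf : ContDiff ℝ 1 f) (hcpt : ∀ b, IsCompact {x | f x ≤ b})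
    {a c : ℝ} (hac : a < c) (hcrit : ∀ x, fderiv ℝ f x = 0 → f x ≤ a) {p q : E}
    (hp : fderiv ℝ f p = 0) (hq : fderiv ℝ f q = 0) :
    ∃ η > 0, ∀ γ : Path p q, (∀ t, f (γ t) ≤ c + η) →
      ∃ γ' : Path p q, ∀ t, f (γ' t) ≤ c - η := by
  set w := (c - a) / 2 with hw
  obtain ⟨δ, hδ, hband⟩ : ∃ δ > 0, ∀ x ∈ {x | f x ≤ c + 1} ∩ {x | c - w ≤ f x},
      δ ≤ ‖∇ f x‖ := by
    refine ((hcpt _).inter_right (isClosed_le continuous_const hf.continuous)).exists_forall_le'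
      hf.continuous_gradient.norm.continuousOn fun x hx => norm_pos_iff.2 fun h0 => ?_
    have hx2 : c - w ≤ f x := hx.2
    linarith [hcrit x (gradient_eq_zero_iff.1 h0)]
  obtain ⟨s, hdesc, hs0, hsδ⟩ := (((hcpt (c + 1)).eventually_forall_le_sub_gradient hf
    (half_pos hδ)).and (Ioo_mem_nhdsGT (show 0 < 2 * w / δ ^ 2 by positivity))).exists
  rw [lt_div_iff₀ (by positivity)] at hsδ
  refine ⟨min (s * δ ^ 2 / 4) 1, by positivity, fun γ hγ => ?_⟩
  -- the gradient step fixes the critical endpoints, lowers the points above `c - w` by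
  -- `s * δ ^ 2 / 2` and raises the others by at most `s * δ ^ 2 / 16`
  refine ⟨{ toFun := fun t => γ t - s • ∇ f (γ t)
            continuous_toFun := γ.continuous.sub
              (continuous_const.smul (hf.continuous_gradient.comp γ.continuous))
            source' := by simp [gradient_eq_zero_iff.2 hp]
            target' := by simp [gradient_eq_zero_iff.2 hq] }, fun t => ?_⟩
  have hK : γ t ∈ {x | f x ≤ c + 1} := (hγ t).trans (by simp)
  have hη := min_le_left (s * δ ^ 2 / 4) 1
  have hdesc := hdesc (γ t) hK
  change f (γ t - s • ∇ f (γ t)) ≤ _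
  rcases lt_or_ge (f (γ t)) (c - w) with hlow | hhigh
  · nlinarith [mul_nonneg hs0.le (sq_nonneg (‖∇ f (γ t)‖ - δ / 4))]
  · have hg := hband _ ⟨hK, hhigh⟩
    nlinarith [mul_le_mul hg (by linarith : δ / 2 ≤ ‖∇ f (γ t)‖ - δ / 2) (by positivity)
      (by positivity), hγ t]

theorem exists_path_forall_lt (hf : ContDiff ℝ 1 f) (hcpt : ∀ b, IsCompact {x | f x ≤ b})
    {a : ℝ} (hcrit : ∀ x, fderiv ℝ f x = 0 → f x ≤ a) {p q : E}
    (hp : fderiv ℝ f p = 0) (hq : fderiv ℝ f q = 0) {ε : ℝ} (hε : 0 < ε) :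
    ∃ γ : Path p q, ∀ t, f (γ t) < a + ε := by
  set B := {b | ∃ γ : Path p q, ∀ t, f (γ t) ≤ b}
  have hB : B.Nonempty := by
    obtain ⟨b, hb⟩ := (isCompact_range
      (hf.continuous.comp (PathConnectedSpace.somePath p q).continuous)).bddAbove
    exact ⟨b, _, fun t => hb ⟨t, rfl⟩⟩
  have hBbdd : BddBelow B := ⟨f p, fun b ⟨γ, hγ⟩ => by simpa using hγ 0⟩
  -- the mountain-pass level `sInf B` cannot exceed the highest critical value
  have hinf : sInf B ≤ a := by
    by_contra! h
    obtain ⟨η, hη, hdeform⟩ := exists_path_deformation hf hcpt h hcrit hp hq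
    obtain ⟨b, ⟨γ, hγ⟩, hb⟩ := exists_lt_of_csInf_lt hB (lt_add_of_pos_right _ hη)
    obtain ⟨γ', hγ'⟩ := hdeform γ fun t => (hγ t).trans hb.le
    linarith [csInf_le hBbdd ⟨γ', hγ'⟩]
  obtain ⟨b, ⟨γ, hγ⟩, hb⟩ := exists_lt_of_csInf_lt hB (by linarith : sInf B < a + ε)
  exact ⟨γ, fun t => (hγ t).trans_lt hb⟩

end Gradient

section Sublevel

variable {X : Type*} [TopologicalSpace X] {f : X → ℝ}

theorem exists_isLocalMin_mem_of_subset_union (hf : Continuous f) {c : ℝ}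
    (hc : IsCompact {x | f x ≤ c}) {U V : Set X} (hU : IsOpen U) (hV : IsOpen V)
    (hUV : Disjoint U V) (hcover : {x | f x ≤ c} ⊆ U ∪ V) (hne : ({x | f x ≤ c} ∩ U).Nonempty) :
    ∃ x ∈ U, IsLocalMin f x := by
  have hcpt : IsCompact ({x | f x ≤ c} ∩ U) := by
    have : {x | f x ≤ c} ∩ U = {x | f x ≤ c} \ V := Set.ext fun x =>
      ⟨fun ⟨hc, hU⟩ => ⟨hc, hUV.notMem_of_mem_left hU⟩,
        fun ⟨hc, hV⟩ => ⟨hc, (hcover hc).resolve_right hV⟩⟩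
    exact this ▸ hc.diff hV
  obtain ⟨x, hx, hmin⟩ := hcpt.exists_isMinOn hne hf.continuousOn
  refine ⟨x, hx.2, ?_⟩
  filter_upwards [hU.mem_nhds hx.2] with y hy
  by_contra! hlt
  exact hlt.not_ge (hmin ⟨hlt.le.trans hx.1, hy⟩)

theorem exists_sublevel_subset_of_isOpen (hf : Continuous f) {c : ℝ}
    (hc : IsCompact {x | f x ≤ c + 1}) {W : Set X} (hW : IsOpen W) (hsub : {x | f x ≤ c} ⊆ W) :
    ∃ ε > 0, {x | f x ≤ c + ε} ⊆ W := by
  obtain ⟨b, hcb, hb⟩ := (hc.diff hW).exists_forall_le' hf.continuousOn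
    fun x hx => not_le.1 fun h => hx.2 (hsub h)
  refine ⟨min ((b - c) / 2) 1, by positivity, fun x hx => ?_⟩
  by_contra hxW
  have hx : f x ≤ c + min ((b - c) / 2) 1 := hx
  have := hb x ⟨hx.trans (by simp), hxW⟩
  linarith [min_le_left ((b - c) / 2) 1]

end Sublevel

theorem isPreconnected_sublevel_of_fderiv_eq_zero_le {E : Type*} [NormedAddCommGroup E]
    [InnerProductSpace ℝ E] [ProperSpace E] {f : E → ℝ} (hf : ContDiff ℝ 1 f)
    (hcpt : ∀ b, IsCompact {x | f x ≤ b}) {a : ℝ} (hcrit : ∀ x, fderiv ℝ f x = 0 → f x ≤ a)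
    {c : ℝ} (hac : a ≤ c) : IsPreconnected {x | f x ≤ c} := by
  rw [isPreconnected_iff_subset_of_fully_disjoint_closed (hcpt c).isClosed]
  intro A B hA hB hcover hAB
  obtain ⟨U, V, hU, hV, hAU, hBV, hUV⟩ := SeparatedNhds.of_isCompact_isCompact
    ((hcpt c).inter_right hA) ((hcpt c).inter_right hB)
    (hAB.mono inter_subset_right inter_subset_right)
  obtain ⟨ε, hε, hsub⟩ := exists_sublevel_subset_of_isOpen hf.continuous (hcpt _) (hU.union hV)
    fun x hx => (hcover hx).imp (fun h => hAU ⟨hx, h⟩) fun h => hBV ⟨hx, h⟩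
  by_contra! hsplit
  obtain ⟨x, hxS, hxA⟩ := not_subset.1 hsplit.1
  obtain ⟨y, hyS, hyB⟩ := not_subset.1 hsplit.2
  have hle : ∀ {z}, f z ≤ c → f z ≤ c + ε := fun h => by linarith
  obtain ⟨p, hpU, hp⟩ := exists_isLocalMin_mem_of_subset_union hf.continuous (hcpt _) hU hV hUV
    hsub ⟨y, hle hyS, hAU ⟨hyS, (hcover hyS).resolve_right hyB⟩⟩
  obtain ⟨q, hqV, hq⟩ := exists_isLocalMin_mem_of_subset_union hf.continuous (hcpt _) hV hU
    hUV.symm ((union_comm U V) ▸ hsub) ⟨x, hle hxS, hBV ⟨hxS, (hcover hxS).resolve_left hxA⟩⟩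
  obtain ⟨γ, hγ⟩ := exists_path_forall_lt hf hcpt hcrit hp.fderiv_eq_zero hq.fderiv_eq_zero hε
  have hrange : range γ ⊆ U ∪ V := by
    rintro _ ⟨t, rfl⟩
    exact hsub (show f (γ t) ≤ c + ε by linarith [hγ t])
  have := (isPreconnected_range γ.continuous).subset_left_of_subset_union hU hV hUV hrange
    ⟨p, ⟨0, γ.source⟩, hpU⟩ ⟨1, γ.target⟩
  exact hUV.notMem_of_mem_left this hqV

section AlphaPL

variable {E : Type*} [NormedAddCommGroup E] [NormedSpace ℝ E] {f : E → ℝ} {fstar α μ : ℝ}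

theorem exists_hasFDerivAt_rpow_sub_of_alphaPL {f' : E →L[ℝ] ℝ} {x : E} (hf : HasFDerivAt f f' x)
    (hα : 1 < α) (hμ : 0 < μ) (hx : fstar < f x) (hPL : μ * (f x - fstar) ≤ ‖f'‖ ^ α) :
    ∃ g' : E →L[ℝ] ℝ, HasFDerivAt (fun y => (f y - fstar) ^ (1 - α⁻¹)) g' x ∧
      (1 - α⁻¹) * μ ^ α⁻¹ ≤ ‖g'‖ := by
  set t := f x - fstar
  have ht : 0 < t := sub_pos.2 hx
  have hθ : 0 < 1 - α⁻¹ := sub_pos.2 (inv_lt_one_of_one_lt₀ hα)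
  have hderiv : HasDerivAt (fun s => s ^ (1 - α⁻¹)) ((1 - α⁻¹) * t ^ (1 - α⁻¹ - 1)) t :=
    Real.hasDerivAt_rpow_const (Or.inl ht.ne')
  refine ⟨_, hderiv.comp_hasFDerivAt_of_eq x (hf.sub_const fstar) rfl, ?_⟩
  have hroot : μ ^ α⁻¹ * t ^ α⁻¹ ≤ ‖f'‖ := by
    rw [← Real.mul_rpow hμ.le ht.le, ← Real.rpow_rpow_inv (norm_nonneg f') (by linarith : α ≠ 0)]
    exact Real.rpow_le_rpow (by positivity) hPL (by positivity)
  have hcancel : t ^ (1 - α⁻¹ - 1) * t ^ α⁻¹ = 1 := by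
    rw [← Real.rpow_add ht, show 1 - α⁻¹ - 1 + α⁻¹ = 0 by ring, Real.rpow_zero]
  rw [norm_smul, Real.norm_of_nonneg (by positivity)]
  calc (1 - α⁻¹) * μ ^ α⁻¹ = (1 - α⁻¹) * t ^ (1 - α⁻¹ - 1) * (μ ^ α⁻¹ * t ^ α⁻¹) := by
        linear_combination (-(1 - α⁻¹) * μ ^ α⁻¹) * hcancel
    _ ≤ (1 - α⁻¹) * t ^ (1 - α⁻¹ - 1) * ‖f'‖ := by gcongr

theorem isBounded_sublevel_of_alphaPL [ProperSpace E] (hf : ContDiff ℝ 1 f) (hα : 1 < α)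
    (hμ : 0 < μ) (hmin : ∀ x, fstar ≤ f x) (hPL : ∀ x, μ * (f x - fstar) ≤ ‖fderiv ℝ f x‖ ^ α)
    (hbdd : Bornology.IsBounded {x | f x = fstar}) (c : ℝ) :
    Bornology.IsBounded {x | f x ≤ c} := by
  set θ := 1 - α⁻¹
  have hθ : 0 < θ := sub_pos.2 (inv_lt_one_of_one_lt₀ hα)
  set κ := θ * μ ^ α⁻¹
  have hκ : 0 < κ := by positivity
  have hgrad (x : E) (hx : 0 < (f x - fstar) ^ θ) : ∃ g' : E →L[ℝ] ℝ,
      HasFDerivAt (fun y => (f y - fstar) ^ θ) g' x ∧ κ / 2 < ‖g'‖ := by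
    have hfx : fstar < f x := by
      by_contra! h
      simp [le_antisymm h (hmin x), Real.zero_rpow hθ.ne'] at hx
    obtain ⟨g', hg', hκg'⟩ := exists_hasFDerivAt_rpow_sub_of_alphaPL
      (hf.differentiable one_ne_zero x).hasFDerivAt hα hμ hfx (hPL x)
    exact ⟨g', hg', by linarith⟩
  refine (hbdd.cthickening (δ := (c - fstar) ^ θ / (κ / 2))).subset fun x (hx : f x ≤ c) => ?_
  obtain ⟨z, hz, hxz⟩ := exists_eq_zero_mul_dist_le (g := fun y => (f y - fstar) ^ θ)
    ((hf.continuous.sub continuous_const).rpow_const fun _ => Or.inr hθ.le)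
    (fun y => Real.rpow_nonneg (sub_nonneg.2 (hmin y)) θ) (half_pos hκ) hgrad x
  refine mem_cthickening_of_dist_le x z _ _ ?_ ?_
  · simpa [sub_eq_zero, hθ.ne'] using
      (Real.rpow_eq_zero (sub_nonneg.2 (hmin z)) hθ.ne').1 hz
  · rw [le_div_iff₀ (half_pos hκ), mul_comm]
    exact hxz.trans (Real.rpow_le_rpow (sub_nonneg.2 (hmin x)) (by linarith) hθ.le)

end AlphaPL

theorem sublevel_connected_of_alphaPL_general {n : ℕ}
    (f : EuclideanSpace ℝ (Fin n) → ℝ) (fstar : ℝ) (α μ : ℝ)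
    (hf : ContDiff ℝ 1 f)
    (hα : 1 < α) (hμ : 0 < μ)
    (hmin : ∀ x, fstar ≤ f x)
    (hPL : ∀ x, μ * (f x - fstar) ≤ ‖fderiv ℝ f x‖ ^ α)
    (hbdd : Bornology.IsBounded {x | f x = fstar}) :
    ∀ c : ℝ, IsPreconnected {x | f x ≤ c} := by
  intro c
  have hcpt (b : ℝ) : IsCompact {x | f x ≤ b} :=
    isCompact_of_isClosed_isBounded (isClosed_le hf.continuous continuous_const)
      (isBounded_sublevel_of_alphaPL hf hα hμ hmin hPL hbdd b)
  have hcrit (x) (hx : fderiv ℝ f x = 0) : f x ≤ fstar := by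
    have := hPL x
    rw [hx, norm_zero, Real.zero_rpow (by linarith)] at this
    nlinarith
  rcases lt_or_ge c fstar with hc | hc
  · convert isPreconnected_empty
    exact eq_empty_of_forall_notMem fun x (hx : f x ≤ c) => by linarith [hmin x]
  · exact isPreconnected_sublevel_of_fderiv_eq_zero_le hf hcpt hcrit hc

/-- The α-PL condition with bounded minimizer set implies all sublevel sets are connected. -/
theorem sublevel_connected_of_alphaPL {n : ℕ}
    (f : EuclideanSpace ℝ (Fin n) → ℝ) (fstar : ℝ) (α μ : ℝ)
    (hf : ContDiff ℝ 1 f)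
    (hα : 1 < α) (hμ : 0 < μ)
    (hmin : ∀ x, fstar ≤ f x) (hattained : ∃ x, f x = fstar)
    (hPL : ∀ x, μ * (f x - fstar) ≤ ‖fderiv ℝ f x‖ ^ α)
    (hbdd : Bornology.IsBounded {x | f x = fstar}) :
    ∀ c : ℝ, IsPreconnected {x | f x ≤ c} :=
  sublevel_connected_of_alphaPL_general f fstar α μ hf hα hμ hmin hPL hbdd
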